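/- Let ρ > 0, r > 0, and (m,M) ∈ ℝ^d × S₀^d. The smallest value of r' > 0 such that (m,M) lies in the convex hull of L_{ρ,r'} is r' = sqrt(2ρ·e_kin(ρ,m,M)). -/

import Mathlib

/-!
With `P := ρ • M + (r² / d) • 1`, and since `circProd z = z zᵀ - (r² / d) • 1` on the sphere
`|z| = r`, the point `(m, M)` lies in the convex hull of `L_{ρ,r}` iff `(m, P)` is a convex
combination of pairs `(z, z zᵀ)` with `|z| = r`, i.e. iff `m` and `P` are the mean and second
moment of a finitely supported probability measure on that sphere. These are exactly the pairs with
`P - m mᵀ ⪰ 0` and `tr P = r²`: the covariance of a measure is positive semidefinite, and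
conversely, writing `P - m mᵀ = ∑ vᵢ vᵢᵀ`, each rank-one piece is the covariance of a two-point
measure on the line `m + ℝ vᵢ` through two points of the sphere.

As `tr M = 0` the trace condition holds automatically, and `P - m mᵀ = ρ ((r² / (d ρ)) • 1 - A)`
with `A = m mᵀ / ρ - M` is positive semidefinite iff `λ_max(A) ≤ r² / (d ρ)`, that is
`r² ≥ 2 ρ e_kin(ρ, m, M)`.
-/

open Matrix

noncomputable def lamMax {d : ℕ} (M : Matrix (Fin d) (Fin d) ℝ) : ℝ :=
  sSup {r : ℝ | ∃ v : Fin d → ℝ, v ⬝ᵥ v = 1 ∧ v ⬝ᵥ M.mulVec v = r}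

noncomputable def eKin {d : ℕ} (ρ : ℝ) (m : Fin d → ℝ) (M : Matrix (Fin d) (Fin d) ℝ) : ℝ :=
  ((d : ℝ) / 2) * lamMax (ρ⁻¹ • vecMulVec m m - M)

noncomputable def circProd {d : ℕ} (m : Fin d → ℝ) : Matrix (Fin d) (Fin d) ℝ :=
  vecMulVec m m - ((1 / (d : ℝ)) * (m ⬝ᵥ m)) • (1 : Matrix (Fin d) (Fin d) ℝ)

noncomputable def Lset (d : ℕ) (ρ r : ℝ) :
    Set ((Fin d → ℝ) × Matrix (Fin d) (Fin d) ℝ) :=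
  {q | ∃ m : Fin d → ℝ, m ⬝ᵥ m = r ^ 2 ∧ q = (m, ρ⁻¹ • circProd m)}

def sphereMoments (n : Type*) [Fintype n] (r : ℝ) : Set ((n → ℝ) × Matrix n n ℝ) :=
  {q | ∃ z : n → ℝ, z ⬝ᵥ z = r ^ 2 ∧ q = (z, vecMulVec z z)}

section Moments

variable {n : Type*}

theorem mk_add_smul_vecMulVec_mem_segment (m b : n → ℝ) {a₁ a₂ : ℝ} (h₁ : 0 ≤ a₁) (h₂ : 0 ≤ a₂)
    (hpos : 0 < a₁ + a₂) :
    (m, vecMulVec m m + (a₁ * a₂) • vecMulVec b b) ∈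
      segment ℝ (m + a₁ • b, vecMulVec (m + a₁ • b) (m + a₁ • b))
        (m - a₂ • b, vecMulVec (m - a₂ • b) (m - a₂ • b)) := by
  refine ⟨a₂ / (a₁ + a₂), a₁ / (a₁ + a₂), by positivity, by positivity, by field_simp; ring, ?_⟩
  ext i
  · simp only [Prod.fst_add, Prod.smul_fst, Pi.add_apply, Pi.sub_apply, Pi.smul_apply, smul_eq_mul]
    field_simp
    ring
  · simp only [Prod.snd_add, Prod.smul_snd, Matrix.add_apply, Matrix.smul_apply, vecMulVec_apply,
      Pi.add_apply, Pi.sub_apply, Pi.smul_apply, smul_eq_mul]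
    field_simp
    ring

variable [Fintype n]

theorem convex_setOf_posSemidef_sub_vecMulVec_and_trace_eq (r : ℝ) :
    Convex ℝ {q : (n → ℝ) × Matrix n n ℝ |
      (q.2 - vecMulVec q.1 q.1).PosSemidef ∧ q.2.trace = r ^ 2} := by
  rintro ⟨m₁, P₁⟩ ⟨hP₁, htr₁⟩ ⟨m₂, P₂⟩ ⟨hP₂, htr₂⟩ a b ha hb hab
  simp only [Prod.smul_mk, Prod.mk_add_mk]
  refine ⟨?_, ?_⟩
  · have hvar : a • P₁ + b • P₂ - vecMulVec (a • m₁ + b • m₂) (a • m₁ + b • m₂) =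
        a • (P₁ - vecMulVec m₁ m₁) + b • (P₂ - vecMulVec m₂ m₂) +
          (a * b) • vecMulVec (m₁ - m₂) (m₁ - m₂) := by
      ext i j
      simp only [Matrix.sub_apply, Matrix.add_apply, Matrix.smul_apply, vecMulVec_apply,
        Pi.add_apply, Pi.sub_apply, Pi.smul_apply, smul_eq_mul]
      linear_combination -(a * m₁ i * m₁ j + b * m₂ i * m₂ j) * hab
    have hdiff := (posSemidef_vecMulVec_self_star (m₁ - m₂)).smul (mul_nonneg ha hb)
    rw [star_trivial] at hdiff
    rw [hvar]
    exact ((hP₁.smul ha).add (hP₂.smul hb)).add hdiff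
  · simp only [trace_add, trace_smul, htr₁, htr₂, smul_eq_mul]
    linear_combination r ^ 2 * hab

theorem dotProduct_add_smul_self (m b : n → ℝ) (a : ℝ) :
    (m + a • b) ⬝ᵥ (m + a • b) = m ⬝ᵥ m + 2 * a * (m ⬝ᵥ b) + a ^ 2 * (b ⬝ᵥ b) := by
  simp only [add_dotProduct, dotProduct_add, smul_dotProduct, dotProduct_smul, smul_eq_mul,
    dotProduct_comm b m]
  ring

theorem mk_add_smul_vecMulVec_mem_convexHull_sphereMoments {m b : n → ℝ} {t r : ℝ}
    (hb : b ≠ 0) (ht : 0 ≤ t) (hr : m ⬝ᵥ m + t * (b ⬝ᵥ b) = r ^ 2) :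
    (m, vecMulVec m m + t • vecMulVec b b) ∈ convexHull ℝ (sphereMoments n r) := by
  obtain rfl | ht := ht.eq_or_lt
  · rw [zero_smul, add_zero]
    exact subset_convexHull ℝ _ ⟨m, by simpa using hr, rfl⟩
  have hβ : 0 < b ⬝ᵥ b := by simpa using dotProduct_self_star_pos_iff.2 hb
  have hβ₀ := hβ.ne'
  set c := m ⬝ᵥ b
  set D := √(c ^ 2 + t * (b ⬝ᵥ b) ^ 2)
  have hD : D ^ 2 = c ^ 2 + t * (b ⬝ᵥ b) ^ 2 := Real.sq_sqrt (by positivity)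
  have hcD : |c| < D := Real.lt_sqrt_of_sq_lt (by nlinarith [sq_abs c, mul_pos ht (pow_pos hβ 2)])
  -- `a₁` and `-a₂` are the roots of `(m + a • b) ⬝ᵥ (m + a • b) = r ^ 2`
  set a₁ := (D - c) / b ⬝ᵥ b with ha₁_def
  set a₂ := (D + c) / b ⬝ᵥ b with ha₂_def
  have ha₁ : 0 < a₁ := div_pos (by linarith [le_abs_self c]) hβ
  have ha₂ : 0 < a₂ := div_pos (by linarith [neg_abs_le c]) hβ
  have hprod : a₁ * a₂ = t := by
    rw [ha₁_def, ha₂_def]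
    field_simp
    linear_combination hD
  have hz₁ : (m + a₁ • b, vecMulVec (m + a₁ • b) (m + a₁ • b)) ∈ sphereMoments n r := by
    refine ⟨_, ?_, rfl⟩
    rw [dotProduct_add_smul_self, ← hr, ha₁_def]
    field_simp
    linear_combination hD
  have hz₂ : (m - a₂ • b, vecMulVec (m - a₂ • b) (m - a₂ • b)) ∈ sphereMoments n r := by
    refine ⟨_, ?_, rfl⟩
    rw [sub_eq_add_neg, ← neg_smul, dotProduct_add_smul_self, ← hr, ha₂_def]
    field_simp
    linear_combination hD
  rw [← hprod]
  exact segment_subset_convexHull hz₁ hz₂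
    (mk_add_smul_vecMulVec_mem_segment m b ha₁.le ha₂.le (by positivity))

theorem mk_add_mem_convexHull_sphereMoments {m : n → ℝ} {C : Matrix n n ℝ} {r : ℝ}
    (hC : C.PosSemidef) (hr : m ⬝ᵥ m + C.trace = r ^ 2) :
    (m, vecMulVec m m + C) ∈ convexHull ℝ (sphereMoments n r) := by
  classical
  obtain ⟨k, v, rfl⟩ := posSemidef_iff_eq_sum_vecMulVec.1 hC
  simp only [star_trivial, trace_sum, trace_vecMulVec] at hr ⊢
  set s := ∑ i, v i ⬝ᵥ v i
  have hβ : ∀ i, 0 ≤ v i ⬝ᵥ v i := fun i => dotProduct_self_star_nonneg (v i)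
  obtain hs | hs := (Finset.sum_nonneg fun i _ => hβ i : 0 ≤ s).eq_or_lt
  · have hv : ∀ i, v i = 0 := fun i => dotProduct_self_eq_zero.1
      ((Finset.sum_eq_zero_iff_of_nonneg fun i _ => hβ i).1 hs.symm i (Finset.mem_univ i))
    simp only [s, hv, vecMulVec_zero, dotProduct_zero, Finset.sum_const_zero, add_zero] at hr ⊢
    exact subset_convexHull ℝ _ ⟨m, hr, rfl⟩
  -- split `C = ∑ vᵢ vᵢᵀ` into the rank-one pieces with nonzero `vᵢ`, weighted by `|vᵢ|² / s`
  set t := Finset.univ.filter fun i => v i ⬝ᵥ v i ≠ 0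
  have hpoint : ∀ i ∈ t, (m, vecMulVec m m + (s / v i ⬝ᵥ v i) • vecMulVec (v i) (v i)) ∈
      convexHull ℝ (sphereMoments n r) := fun i hi => by
    have hi : v i ⬝ᵥ v i ≠ 0 := (Finset.mem_filter.1 hi).2
    refine mk_add_smul_vecMulVec_mem_convexHull_sphereMoments (fun h => hi (by simp [h]))
      (div_nonneg hs.le (hβ i)) ?_
    rw [div_mul_cancel₀ _ hi, hr]
  have hw : ∑ i ∈ t, v i ⬝ᵥ v i / s = 1 := by
    rw [← Finset.sum_div, Finset.sum_filter_ne_zero, div_self hs.ne']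
  convert (convex_convexHull ℝ _).sum_mem (fun i _ => div_nonneg (hβ i) hs.le) hw hpoint using 1
  refine Prod.ext ?_ ?_
  · rw [Prod.fst_sum]
    simp only [Prod.smul_mk]
    rw [← Finset.sum_smul, hw, one_smul]
  · rw [Prod.snd_sum]
    have hterm : ∀ i ∈ t, (v i ⬝ᵥ v i / s) • (vecMulVec m m + (s / v i ⬝ᵥ v i) •
        vecMulVec (v i) (v i)) = (v i ⬝ᵥ v i / s) • vecMulVec m m + vecMulVec (v i) (v i) :=
      fun i hi => by
        rw [smul_add, smul_smul, div_mul_div_comm, mul_comm s,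
          div_self (mul_ne_zero (Finset.mem_filter.1 hi).2 hs.ne'), one_smul]
    simp only [Prod.smul_mk]
    have hsupp : ∀ i ∈ Finset.univ, vecMulVec (v i) (v i) ≠ 0 → v i ⬝ᵥ v i ≠ 0 :=
      fun i _ h hi => h (by simp [dotProduct_self_eq_zero.1 hi])
    rw [Finset.sum_congr rfl hterm, Finset.sum_add_distrib, ← Finset.sum_smul, hw, one_smul,
      Finset.sum_filter_of_ne hsupp]

theorem mem_convexHull_sphereMoments_iff {m : n → ℝ} {P : Matrix n n ℝ} {r : ℝ} :
    (m, P) ∈ convexHull ℝ (sphereMoments n r) ↔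
      (P - vecMulVec m m).PosSemidef ∧ P.trace = r ^ 2 := by
  refine ⟨fun h => convexHull_min ?_ (convex_setOf_posSemidef_sub_vecMulVec_and_trace_eq r) h,
    fun ⟨hC, htr⟩ => ?_⟩
  · rintro _ ⟨z, hz, rfl⟩
    exact ⟨by simpa using PosSemidef.zero, by rw [trace_vecMulVec, hz]⟩
  · have h := mk_add_mem_convexHull_sphereMoments hC (r := r)
      (by rw [trace_sub, trace_vecMulVec, htr]; ring)
    rwa [add_sub_cancel] at h

end Moments

theorem mem_convexHull_Lset_iff {d : ℕ} {ρ r : ℝ} (hρ : ρ ≠ 0) {m : Fin d → ℝ}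
    {M : Matrix (Fin d) (Fin d) ℝ} :
    (m, M) ∈ convexHull ℝ (Lset d ρ r) ↔
      (m, ρ • M + (r ^ 2 / d) • 1) ∈ convexHull ℝ (sphereMoments (Fin d) r) := by
  set c := r ^ 2 / d
  let T : (Fin d → ℝ) × Matrix (Fin d) (Fin d) ℝ →ᵃ[ℝ] (Fin d → ℝ) × Matrix (Fin d) (Fin d) ℝ :=
    (LinearMap.prodMap LinearMap.id (ρ⁻¹ • LinearMap.id)).toAffineMap +
      AffineMap.const ℝ _ (0, -(ρ⁻¹ • c • 1))
  have hT : ∀ q, T q = (q.1, ρ⁻¹ • (q.2 - c • 1)) := fun q => by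
    simp [T, sub_eq_add_neg]
  have hL : Lset d ρ r = T '' sphereMoments (Fin d) r := by
    ext q
    simp only [Lset, sphereMoments, Set.mem_image]
    constructor
    · rintro ⟨z, hz, rfl⟩
      refine ⟨_, ⟨z, hz, rfl⟩, ?_⟩
      rw [hT, circProd, hz, one_div_mul_eq_div]
    · rintro ⟨_, ⟨z, hz, rfl⟩, rfl⟩
      refine ⟨z, hz, ?_⟩
      rw [hT, circProd, hz, one_div_mul_eq_div]
  have hTinj : Function.Injective T := fun q q' h => by
    rw [hT, hT, Prod.mk.injEq] at h
    exact Prod.ext h.1 (sub_left_injective (smul_right_injective _ (inv_ne_zero hρ) h.2))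
  have hmM : (m, M) = T (m, ρ • M + c • 1) := by
    rw [hT, add_sub_cancel_right, smul_smul, inv_mul_cancel₀ hρ, one_smul]
  rw [hL, ← T.image_convexHull, hmM, hTinj.mem_set_image]

section Rayleigh

variable {d : ℕ}

theorem bddAbove_rayleigh (A : Matrix (Fin d) (Fin d) ℝ) :
    BddAbove {r : ℝ | ∃ v : Fin d → ℝ, v ⬝ᵥ v = 1 ∧ v ⬝ᵥ A.mulVec v = r} := by
  have hsphere : IsCompact {v : Fin d → ℝ | v ⬝ᵥ v = 1} := by
    refine Metric.isCompact_of_isClosed_isBounded (isClosed_eq (by fun_prop) continuous_const) ?_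
    refine (Metric.isBounded_iff_subset_closedBall 0).2 ⟨1, fun v hv => ?_⟩
    rw [mem_closedBall_zero_iff, pi_norm_le_iff_of_nonneg zero_le_one]
    intro i
    rw [Real.norm_eq_abs, ← sq_le_one_iff_abs_le_one, sq, ← hv.out]
    exact Finset.single_le_sum (f := fun j => v j * v j) (fun j _ => mul_self_nonneg _)
      (Finset.mem_univ i)
  exact (hsphere.image (f := fun v => v ⬝ᵥ A *ᵥ v) (by fun_prop)).bddAbove

theorem dotProduct_mulVec_le_lamMax (A : Matrix (Fin d) (Fin d) ℝ) (v : Fin d → ℝ) :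
    v ⬝ᵥ A *ᵥ v ≤ lamMax A * (v ⬝ᵥ v) := by
  obtain rfl | hv := eq_or_ne v 0
  · simp
  have hpos : 0 < v ⬝ᵥ v := by simpa using dotProduct_self_star_pos_iff.2 hv
  set k := √(v ⬝ᵥ v)
  have hk : k ^ 2 = v ⬝ᵥ v := Real.sq_sqrt hpos.le
  have hk₀ : k ≠ 0 := (Real.sqrt_pos.2 hpos).ne'
  have hunit : (k⁻¹ • v) ⬝ᵥ (k⁻¹ • v) = 1 := by
    rw [smul_dotProduct, dotProduct_smul, ← hk, smul_eq_mul, smul_eq_mul]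
    field_simp
  have hle := le_csSup (bddAbove_rayleigh A) ⟨k⁻¹ • v, hunit, rfl⟩
  rw [mulVec_smul, smul_dotProduct, dotProduct_smul, smul_eq_mul, smul_eq_mul] at hle
  rw [← hk]
  calc v ⬝ᵥ A *ᵥ v = k ^ 2 * (k⁻¹ * (k⁻¹ * v ⬝ᵥ A *ᵥ v)) := by field_simp
    _ ≤ k ^ 2 * lamMax A := by gcongr; exact hle
    _ = lamMax A * k ^ 2 := mul_comm _ _

theorem lamMax_le_iff [NeZero d] {A : Matrix (Fin d) (Fin d) ℝ} (hA : A.IsSymm) {c : ℝ} :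
    lamMax A ≤ c ↔ (c • 1 - A).PosSemidef := by
  have herm : (c • 1 - A).IsHermitian :=
    (isHermitian_one.smul (IsSelfAdjoint.all c)).sub
      (by rwa [IsHermitian, conjTranspose_eq_transpose_of_trivial])
  simp only [posSemidef_iff_dotProduct_mulVec, herm, true_and, star_trivial, sub_mulVec,
    smul_mulVec, one_mulVec, dotProduct_sub, dotProduct_smul, smul_eq_mul, sub_nonneg]
  refine ⟨fun h v => (dotProduct_mulVec_le_lamMax A v).trans ?_, fun h => ?_⟩
  · exact mul_le_mul_of_nonneg_right h (by simpa using dotProduct_self_star_nonneg v)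
  · refine csSup_le ⟨_, Pi.single 0 1, by simp, rfl⟩ ?_
    rintro _ ⟨v, hv, rfl⟩
    simpa [hv] using h v

end Rayleigh

theorem posSemidef_smul_iff {n : Type*} [Fintype n] {X : Matrix n n ℝ} {a : ℝ} (ha : 0 < a) :
    (a • X).PosSemidef ↔ X.PosSemidef :=
  ⟨fun h => by simpa [smul_smul, inv_mul_cancel₀ ha.ne'] using h.smul (inv_nonneg.2 ha.le),
    fun h => h.smul ha.le⟩

theorem mem_convexHull_Lset_iff_two_mul_eKin_le {d : ℕ} [NeZero d] {ρ r : ℝ} (hρ : 0 < ρ)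
    {m : Fin d → ℝ} {M : Matrix (Fin d) (Fin d) ℝ} (hsymm : M.IsSymm) (htr : M.trace = 0) :
    (m, M) ∈ convexHull ℝ (Lset d ρ r) ↔ 2 * ρ * eKin ρ m M ≤ r ^ 2 := by
  have hd : (d : ℝ) ≠ 0 := Nat.cast_ne_zero.2 (NeZero.ne d)
  set A := ρ⁻¹ • vecMulVec m m - M
  have hA : A.IsSymm := (IsSymm.smul (transpose_vecMulVec m m) ρ⁻¹).sub hsymm
  have hcov : ρ • M + (r ^ 2 / d) • 1 - vecMulVec m m = ρ • ((r ^ 2 / (d * ρ)) • 1 - A) := by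
    simp only [A, smul_sub, smul_smul]
    field_simp
    module
  have htrace : (ρ • M + (r ^ 2 / d) • (1 : Matrix (Fin d) (Fin d) ℝ)).trace = r ^ 2 := by
    simp [htr, hd]
  have heKin : 2 * ρ * eKin ρ m M = lamMax A * (d * ρ) := by
    rw [eKin]
    ring
  rw [mem_convexHull_Lset_iff hρ.ne', mem_convexHull_sphereMoments_iff, hcov,
    posSemidef_smul_iff hρ, ← lamMax_le_iff hA, heKin, ← le_div_iff₀ (by positivity),
    and_iff_left htrace]

theorem smallest_radius_general {d : ℕ} (ρ : ℝ) (hρ : 0 < ρ)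
    (m : Fin d → ℝ) (M : Matrix (Fin d) (Fin d) ℝ)
    (hsymm : M.IsSymm) (htr : M.trace = 0) (hpos : 0 < eKin ρ m M) :
    IsLeast {r' : ℝ | 0 < r' ∧ (m, M) ∈ convexHull ℝ (Lset d ρ r')}
      (Real.sqrt (2 * ρ * eKin ρ m M)) := by
  have : NeZero d := ⟨by rintro rfl; simp [eKin] at hpos⟩
  have he : 0 < 2 * ρ * eKin ρ m M := by positivity
  simp only [IsLeast, lowerBounds, Set.mem_ofPred_eq,
    mem_convexHull_Lset_iff_two_mul_eKin_le hρ hsymm htr]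
  exact ⟨⟨Real.sqrt_pos.2 he, (Real.sq_sqrt he.le).ge⟩,
    fun r ⟨hr, hle⟩ => Real.sqrt_le_iff.2 ⟨hr.le, hle⟩⟩

/-- the smallest r' > 0 with (m,M) ∈ (L_{ρ,r'})^co is
sqrt(2ρ·e_kin(ρ,m,M)). -/
theorem smallest_radius {d : ℕ} (hd : 2 ≤ d) (ρ : ℝ) (hρ : 0 < ρ)
    (m : Fin d → ℝ) (M : Matrix (Fin d) (Fin d) ℝ)
    (hsymm : M.IsSymm) (htr : M.trace = 0) (hpos : 0 < eKin ρ m M) :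
    IsLeast {r' : ℝ | 0 < r' ∧ (m, M) ∈ convexHull ℝ (Lset d ρ r')}
      (Real.sqrt (2 * ρ * eKin ρ m M)) :=
  smallest_radius_general ρ hρ m M hsymm htr hpos
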